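/- arXiv:1607.02111 — 3 statements merged into one kernel-verified Lean document; each statement's English description precedes it below -/
import Mathlib

section
/- For each integer k ≥ 0, the function x ↦ k! π^{-k} L_k^{n/2-1}(π‖x‖²) e^{-π‖x‖²} on R^n has Fourier transform u ↦ ‖u‖^{2k} e^{-π‖u‖²}, where L_k^{n/2-1} is the Laguerre polynomial of degree k with parameter n/2 - 1. -/
open MeasureTheory
open scoped FourierTransform Real

/-- The generalized Laguerre polynomial `L_k^α`, given by
`L_k^α(x) = ∑_{j=0}^k (-1)^j (α+j+1)⋯(α+k)/((k-j)!) · x^j / j!`. -/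
noncomputable def genLaguerre (α : ℝ) (k : ℕ) (x : ℝ) : ℝ :=
  ∑ j ∈ Finset.range (k + 1),
    (-1 : ℝ) ^ j * ((∏ i ∈ Finset.range (k - j), (α + j + 1 + i)) / (Nat.factorial (k - j)))
      * x ^ j / (Nat.factorial j)

/-!
Differentiating the Gaussian `e^{-b‖v‖²}` in `b` multiplies it by `-‖v‖²`, so the Fourier
transform of `‖v‖^{2k} e^{-b‖v‖²}` at `u` is `(-∂_b)^k` of `(π/b)^{n/2} e^{-c/b}`, `c = π²‖u‖²`.
The recurrence `(k+1) L_{k+1}^α = (α+k+1-x) L_k^α + x (L_k^α)'` identifies these derivatives as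
`k! π^{n/2} b^{-n/2-k} L_k^{n/2-1}(c/b) e^{-c/b}`, which at `b = π` is the Laguerre function of the
statement. Both functions are even, so Fourier inversion turns this into the claim.
-/

open Finset Nat

noncomputable def genLaguerreCoeff (α : ℝ) (k j : ℕ) : ℝ :=
  (-1 : ℝ) ^ j * ((∏ i ∈ range (k - j), (α + j + 1 + i)) / (k - j)!) / j !

lemma genLaguerre_eq_sum (α : ℝ) (k : ℕ) (x : ℝ) :
    genLaguerre α k x = ∑ j ∈ range (k + 1), genLaguerreCoeff α k j * x ^ j :=
  sum_congr rfl fun j _ => by rw [genLaguerreCoeff]; ring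

lemma genLaguerre_zero (α x : ℝ) : genLaguerre α 0 x = 1 := by
  simp [genLaguerre]

lemma genLaguerreCoeff_succ_zero (α : ℝ) (k : ℕ) :
    (k + 1) * genLaguerreCoeff α (k + 1) 0 = (α + k + 1) * genLaguerreCoeff α k 0 := by
  simp only [genLaguerreCoeff, Nat.sub_zero, prod_range_succ, factorial_succ]
  push_cast
  field_simp
  ring

lemma genLaguerreCoeff_succ_self (α : ℝ) (k : ℕ) :
    (k + 1) * genLaguerreCoeff α (k + 1) (k + 1) = -genLaguerreCoeff α k k := by
  simp only [genLaguerreCoeff, Nat.sub_self, factorial_succ]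
  push_cast
  field_simp
  ring

lemma genLaguerreCoeff_succ_succ (α : ℝ) {k j : ℕ} (hj : j < k) :
    (k + 1) * genLaguerreCoeff α (k + 1) (j + 1)
      = (α + k + 1 + (j + 1)) * genLaguerreCoeff α k (j + 1) - genLaguerreCoeff α k j := by
  obtain ⟨d, rfl⟩ := Nat.exists_eq_add_of_lt hj
  simp only [genLaguerreCoeff, show j + d + 1 + 1 - (j + 1) = d + 1 by omega,
    show j + d + 1 - (j + 1) = d by omega, show j + d + 1 - j = d + 1 by omega, factorial_succ]
  push_cast
  set P := ∏ i ∈ range d, (α + (j + 1) + 1 + i)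
  have hP_top : ∏ i ∈ range (d + 1), (α + (j + 1) + 1 + i) = P * (α + j + d + 2) := by
    rw [prod_range_succ]; ring
  have hP_bot : ∏ i ∈ range (d + 1), (α + j + 1 + i) = P * (α + j + 1) := by
    rw [prod_range_succ']
    push_cast
    congr 1
    · exact prod_congr rfl fun i _ => by ring
    · ring
  rw [hP_top, hP_bot]
  field_simp
  ring

lemma hasDerivAt_genLaguerre (α : ℝ) (k : ℕ) (x : ℝ) :
    HasDerivAt (genLaguerre α k)
      (∑ j ∈ range (k + 1), genLaguerreCoeff α k j * (j * x ^ (j - 1))) x := by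
  rw [show genLaguerre α k = fun y => ∑ j ∈ range (k + 1), genLaguerreCoeff α k j * y ^ j from
    funext (genLaguerre_eq_sum α k)]
  exact HasDerivAt.fun_sum fun j _ => (hasDerivAt_pow j x).const_mul _

lemma mul_deriv_genLaguerre (α : ℝ) (k : ℕ) (x : ℝ) :
    x * deriv (genLaguerre α k) x = ∑ j ∈ range (k + 1), j * genLaguerreCoeff α k j * x ^ j := by
  rw [(hasDerivAt_genLaguerre α k x).deriv, mul_sum]
  refine sum_congr rfl fun j _ => ?_
  rcases j with _ | j
  · simp
  · rw [Nat.add_sub_cancel, pow_succ]; ring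

theorem genLaguerre_succ_mul (α : ℝ) (k : ℕ) (x : ℝ) :
    (k + 1) * genLaguerre α (k + 1) x
      = (α + k + 1 - x) * genLaguerre α k x + x * deriv (genLaguerre α k) x := by
  have hA : (α + k + 1) * genLaguerre α k x + x * deriv (genLaguerre α k) x
      = ∑ j ∈ range (k + 1), (α + k + 1 + j) * genLaguerreCoeff α k j * x ^ j := by
    rw [mul_deriv_genLaguerre, genLaguerre_eq_sum, mul_sum, ← sum_add_distrib]
    exact sum_congr rfl fun j _ => by ring
  have hB : x * genLaguerre α k x = ∑ j ∈ range (k + 1), genLaguerreCoeff α k j * x ^ (j + 1) := by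
    rw [genLaguerre_eq_sum, mul_sum]
    exact sum_congr rfl fun j _ => by ring
  have hmid : ∑ j ∈ range k, (k + 1) * (genLaguerreCoeff α (k + 1) (j + 1) * x ^ (j + 1))
      = ∑ j ∈ range k, (α + k + 1 + (j + 1 : ℕ)) * genLaguerreCoeff α k (j + 1) * x ^ (j + 1)
        - ∑ j ∈ range k, genLaguerreCoeff α k j * x ^ (j + 1) := by
    rw [← sum_sub_distrib]
    refine sum_congr rfl fun j hj => ?_
    rw [← mul_assoc, genLaguerreCoeff_succ_succ α (mem_range.mp hj)]
    push_cast
    ring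
  rw [sum_range_succ'] at hA
  rw [sum_range_succ] at hB
  rw [genLaguerre_eq_sum α (k + 1), mul_sum, sum_range_succ', sum_range_succ, hmid]
  linear_combination (genLaguerreCoeff_succ_zero α k) - hA + hB
    + x ^ (k + 1) * genLaguerreCoeff_succ_self α k

noncomputable def fourierGaussianMoment (ν c : ℝ) (k : ℕ) (b : ℝ) : ℝ :=
  k ! * π ^ ν * b ^ (-(ν + k)) * (genLaguerre (ν - 1) k (c / b) * Real.exp (-(c / b)))

lemma fourierGaussianMoment_pi (ν t : ℝ) (k : ℕ) :
    fourierGaussianMoment ν (π ^ 2 * t) k π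
      = k ! * π ^ (-(k : ℤ)) * genLaguerre (ν - 1) k (π * t) * Real.exp (-π * t) := by
  have hπ : π ^ ν * π ^ (-(ν + k)) = π ^ (-(k : ℤ)) := by
    rw [← Real.rpow_add Real.pi_pos, ← Real.rpow_intCast]
    push_cast
    ring_nf
  rw [fourierGaussianMoment, show π ^ 2 * t / π = π * t by field_simp, mul_assoc _ (π ^ ν), hπ]
  ring_nf

lemma hasDerivAt_fourierGaussianMoment (ν c : ℝ) (k : ℕ) {b : ℝ} (hb : 0 < b) :
    HasDerivAt (fourierGaussianMoment ν c k) (-fourierGaussianMoment ν c (k + 1) b) b := by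
  have hL : HasDerivAt (genLaguerre (ν - 1) k) (deriv (genLaguerre (ν - 1) k) (c / b)) (c / b) :=
    (hasDerivAt_genLaguerre _ k _).differentiableAt.hasDerivAt
  have hℓ := hL.mul ((Real.hasDerivAt_exp _).comp _ (hasDerivAt_neg (c / b)))
  have hx : HasDerivAt (fun b : ℝ => c / b) (-(c / b / b)) b := by
    simpa [div_eq_mul_inv, sq, mul_assoc] using (hasDerivAt_inv hb.ne').const_mul c
  have hpow : HasDerivAt (fun b : ℝ => b ^ (-(ν + k))) (-(ν + k) * b ^ (-(ν + k) - 1)) b :=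
    Real.hasDerivAt_rpow_const (Or.inl hb.ne')
  refine ((hpow.const_mul (k ! * π ^ ν)).mul (hℓ.comp b hx)).congr_deriv ?_
  have hrec := genLaguerre_succ_mul (ν - 1) k (c / b)
  have hb_pow : b ^ (-(ν + k)) = b ^ (-(ν + k) - 1) * b := by
    rw [Real.rpow_sub_one hb.ne', div_mul_cancel₀ _ hb.ne']
  have hbx : b * (c / b / b) = c / b := by field_simp
  simp only [fourierGaussianMoment, Function.comp_apply, Pi.mul_apply, factorial_succ, hb_pow]
  push_cast
  rw [show -(ν + (k + 1)) = -(ν + k) - 1 by ring]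
  linear_combination (k ! * π ^ ν * b ^ (-(ν + k) - 1) * Real.exp (-(c / b))) * hrec
    - (k ! * π ^ ν * b ^ (-(ν + k) - 1) * Real.exp (-(c / b))
      * (deriv (genLaguerre (ν - 1) k) (c / b) - genLaguerre (ν - 1) k (c / b))) * hbx

lemma pow_mul_exp_neg_mul_le (k : ℕ) {a t : ℝ} (ha : 0 < a) (ht : 0 ≤ t) :
    t ^ k * Real.exp (-a * t) ≤ k ! * (2 / a) ^ k * Real.exp (-(a / 2) * t) := by
  have hexp : ((a / 2) * t) ^ k ≤ k ! * Real.exp ((a / 2) * t) := by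
    rw [← div_le_iff₀' (by positivity)]
    exact Real.pow_div_factorial_le_exp _ (by positivity) k
  calc t ^ k * Real.exp (-a * t) = (2 / a) ^ k * ((a / 2) * t) ^ k * Real.exp (-a * t) := by
        rw [← mul_pow]; field_simp
    _ ≤ (2 / a) ^ k * (k ! * Real.exp ((a / 2) * t)) * Real.exp (-a * t) := by gcongr
    _ = k ! * (2 / a) ^ k * Real.exp (-(a / 2) * t) := by
        rw [mul_assoc, mul_assoc, ← Real.exp_add]; ring_nf

lemma hasDerivAt_pow_mul_exp_neg_mul (k : ℕ) (t b : ℝ) :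
    HasDerivAt (fun b => t ^ k * Real.exp (-b * t)) (-(t ^ (k + 1) * Real.exp (-b * t))) b :=
  (((Real.hasDerivAt_exp _).comp b ((hasDerivAt_neg b).mul_const t)).const_mul (t ^ k)).congr_deriv
    (by ring)

section InnerProductSpace

open scoped RealInnerProductSpace

variable {V : Type*} [NormedAddCommGroup V] [InnerProductSpace ℝ V] [FiniteDimensional ℝ V]
  [MeasurableSpace V] [BorelSpace V]

lemma integrable_exp_neg_mul_sq_norm {a : ℝ} (ha : 0 < a) :
    Integrable (fun v : V => Real.exp (-a * ‖v‖ ^ 2)) :=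
  Integrable.of_integral_ne_zero <| by
    rw [GaussianFourier.integral_rexp_neg_mul_sq_norm ha]; positivity

lemma integrable_sq_norm_pow_mul_exp_neg_mul_sq_norm (k : ℕ) {a : ℝ} (ha : 0 < a) :
    Integrable (fun v : V => (‖v‖ ^ 2) ^ k * Real.exp (-a * ‖v‖ ^ 2)) := by
  refine ((integrable_exp_neg_mul_sq_norm (half_pos ha)).const_mul (k ! * (2 / a) ^ k)).mono'
    (by fun_prop) (ae_of_all _ fun v => ?_)
  rw [Real.norm_of_nonneg (by positivity)]
  exact pow_mul_exp_neg_mul_le k ha (sq_nonneg _)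

lemma integrable_genLaguerre_mul_exp_neg_mul_sq_norm (α c : ℝ) (k : ℕ) {a : ℝ} (ha : 0 < a) :
    Integrable (fun v : V => genLaguerre α k (c * ‖v‖ ^ 2) * Real.exp (-a * ‖v‖ ^ 2)) := by
  simp_rw [genLaguerre_eq_sum, sum_mul, mul_pow, ← mul_assoc]
  exact integrable_finsetSum _ fun j _ =>
    ((integrable_sq_norm_pow_mul_exp_neg_mul_sq_norm j ha).const_mul
      (genLaguerreCoeff α k j * c ^ j)).congr (ae_of_all _ fun v => by ring)

lemma hasDerivAt_fourier_sq_norm_pow_mul_gaussian (k : ℕ) (u : V) {b : ℝ} (hb : 0 < b) :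
    HasDerivAt (fun b' => 𝓕 (fun v : V => (((‖v‖ ^ 2) ^ k * Real.exp (-b' * ‖v‖ ^ 2) : ℝ) : ℂ)) u)
      (-𝓕 (fun v : V => (((‖v‖ ^ 2) ^ (k + 1) * Real.exp (-b * ‖v‖ ^ 2) : ℝ) : ℂ)) u) b := by
  simp_rw [Real.fourier_eq, ← integral_neg, ← smul_neg, ← Complex.ofReal_neg]
  refine (hasDerivAt_integral_of_dominated_loc_of_deriv_le (Metric.ball_mem_nhds b (half_pos hb))
    (F := fun b' v => 𝐞 (-⟪v, u⟫) • (((‖v‖ ^ 2) ^ k * Real.exp (-b' * ‖v‖ ^ 2) : ℝ) : ℂ))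
    (bound := fun v => (‖v‖ ^ 2) ^ (k + 1) * Real.exp (-(b / 2) * ‖v‖ ^ 2))
    (.of_forall fun b' => Continuous.aestronglyMeasurable (by fun_prop))
    ((Real.fourierIntegral_convergent_iff u).2
      (integrable_sq_norm_pow_mul_exp_neg_mul_sq_norm k hb).ofReal)
    (Continuous.aestronglyMeasurable (by fun_prop)) (ae_of_all _ fun v b' hb' => ?_)
    (integrable_sq_norm_pow_mul_exp_neg_mul_sq_norm _ (half_pos hb))
    (ae_of_all _ fun v b' _ =>
      ((hasDerivAt_pow_mul_exp_neg_mul k _ b').ofReal_comp.const_smul (𝐞 (-⟪v, u⟫))))).2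
  have hb' : b / 2 ≤ b' := by
    have := (abs_lt.mp (Real.dist_eq b' b ▸ Metric.mem_ball.mp hb')).1
    linarith
  rw [Circle.norm_smul, Complex.norm_real, norm_neg, Real.norm_of_nonneg (by positivity)]
  gcongr

theorem fourier_sq_norm_pow_mul_gaussian (k : ℕ) {b : ℝ} (hb : 0 < b) (u : V) :
    𝓕 (fun v : V => (((‖v‖ ^ 2) ^ k * Real.exp (-b * ‖v‖ ^ 2) : ℝ) : ℂ)) u
      = fourierGaussianMoment (Module.finrank ℝ V / 2) (π ^ 2 * ‖u‖ ^ 2) k b := by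
  induction k generalizing b with
  | zero =>
    have hcpow : ((π / b : ℝ) : ℂ) ^ (Module.finrank ℝ V / 2 : ℂ)
        = ((π ^ (Module.finrank ℝ V / 2 : ℝ) * b ^ (-(Module.finrank ℝ V / 2 : ℝ)) : ℝ) : ℂ) := by
      rw [Real.rpow_neg hb.le, ← div_eq_mul_inv, ← Real.div_rpow Real.pi_pos.le hb.le,
        Complex.ofReal_cpow (by positivity)]
      push_cast
      rfl
    simp only [pow_zero, one_mul, Complex.ofReal_exp]
    push_cast
    rw [fourier_gaussian_innerProductSpace (by simpa using hb), ← Complex.ofReal_div, hcpow]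
    simp only [fourierGaussianMoment, genLaguerre_zero, factorial_zero, CharP.cast_eq_zero,
      add_zero]
    push_cast
    ring_nf
  | succ k ih =>
    have hF := hasDerivAt_fourier_sq_norm_pow_mul_gaussian k u hb
    have hΦ := (hasDerivAt_fourierGaussianMoment
      (Module.finrank ℝ V / 2) (π ^ 2 * ‖u‖ ^ 2) k hb).ofReal_comp
    have heq := Filter.eventuallyEq_of_mem (Ioi_mem_nhds hb) fun b' hb' => ih hb'
    have := (hF.congr_of_eventuallyEq heq.symm).unique hΦ
    rw [Complex.ofReal_neg] at this
    exact neg_injective this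

theorem fourier_genLaguerre_gaussian (k : ℕ) :
    𝓕 (fun x : V => ((k ! : ℝ) * π ^ (-(k : ℤ)) *
        genLaguerre (Module.finrank ℝ V / 2 - 1) k (π * ‖x‖ ^ 2) * Real.exp (-π * ‖x‖ ^ 2) : ℂ))
      = fun u : V => ((‖u‖ ^ (2 * k) * Real.exp (-π * ‖u‖ ^ 2) : ℝ) : ℂ) := by
  set g : V → ℂ := fun v => (((‖v‖ ^ 2) ^ k * Real.exp (-π * ‖v‖ ^ 2) : ℝ) : ℂ)
  have hg : Integrable g := (integrable_sq_norm_pow_mul_exp_neg_mul_sq_norm k Real.pi_pos).ofReal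
  have hFg : 𝓕 g = fun x : V => ((k ! : ℝ) * π ^ (-(k : ℤ)) *
      genLaguerre (Module.finrank ℝ V / 2 - 1) k (π * ‖x‖ ^ 2) * Real.exp (-π * ‖x‖ ^ 2) : ℂ) := by
    funext u
    rw [fourier_sq_norm_pow_mul_gaussian k Real.pi_pos, fourierGaussianMoment_pi]
    push_cast
    ring
  have hFg_int : Integrable (𝓕 g) := by
    rw [hFg]
    refine ((integrable_genLaguerre_mul_exp_neg_mul_sq_norm
      (Module.finrank ℝ V / 2 - 1) π k Real.pi_pos).ofReal.const_mul
      ((k ! : ℂ) * π ^ (-(k : ℤ)))).congr (ae_of_all _ fun v => ?_)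
    simp only [RCLike.ofReal_mul, Complex.ofReal_natCast, mul_assoc]
    rfl
  rw [← hFg]
  funext u
  calc 𝓕 (𝓕 g) u = 𝓕⁻ (𝓕 g) (-u) := by rw [Real.fourierInv_eq_fourier_neg, neg_neg]
    _ = g (-u) := by rw [Continuous.fourierInv_fourier_eq (by fun_prop) hg hFg_int]
    _ = _ := by simp [g, norm_neg, pow_mul]

end InnerProductSpace

/-- The Fourier transform of `x ↦ k! π^{-k} L_k^{n/2-1}(π‖x‖²) e^{-π‖x‖²}` on `ℝⁿ`
is `u ↦ ‖u‖^{2k} e^{-π‖u‖²}`. -/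
theorem fourier_laguerre_gaussian (n : ℕ) (k : ℕ) :
    𝓕 (fun x : EuclideanSpace ℝ (Fin n) =>
        ((Nat.factorial k : ℝ) * π ^ (-(k : ℤ)) *
          genLaguerre ((n : ℝ) / 2 - 1) k (π * ‖x‖ ^ 2) * Real.exp (-π * ‖x‖ ^ 2) : ℂ)) =
      fun u : EuclideanSpace ℝ (Fin n) =>
        ((‖u‖ ^ (2 * k) * Real.exp (-π * ‖u‖ ^ 2) : ℝ) : ℂ) := by
  simpa using fourier_genLaguerre_gaussian (V := EuclideanSpace ℝ (Fin n)) k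
end

section
/- A polynomial p ∈ R[r] is nonnegative on the interval [1, ∞) if and only if it can be written as p(r) = s1(r) + (r - 1)s2(r) where s1 and s2 are sums of squares of polynomials. -/
open Polynomial Filter Topology Set

/-!
Let `m ≥ 0` be the minimum of `p` on `[a, ∞)`, attained at `μ`. Then `p - m` vanishes at `μ`, to
order two if `μ > a` since the minimum is then interior, so `p - m = (X - a) r` or
`p - m = (X - μ)² r` with `r` of lower degree and still nonnegative on `[a, ∞)`. Induction on the
degree concludes, because the quadratic module `Σ + (X - a) Σ` contains the nonnegative constants
and is closed under addition, under multiplication by squares and under multiplication by `X - a`.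
-/

theorem IsSumSq.map {R S F : Type*} [NonUnitalNonAssocSemiring R] [NonUnitalNonAssocSemiring S]
    [FunLike F R S] [NonUnitalRingHomClass F R S] (f : F) {s : R} (hs : IsSumSq s) :
    IsSumSq (f s) := by
  induction hs with
  | zero => simp
  | sq_add a _ ih => simpa using ih.sq_add (f a)

def InQuadraticModule {R : Type*} [CommSemiring R] (g p : R) : Prop :=
  ∃ s₁ s₂ : R, IsSumSq s₁ ∧ IsSumSq s₂ ∧ p = s₁ + g * s₂

namespace InQuadraticModule

variable {R : Type*} [CommSemiring R] {g p q : R}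

theorem of_isSumSq (hp : IsSumSq p) : InQuadraticModule g p :=
  ⟨p, 0, hp, .zero, by simp⟩

theorem add (hp : InQuadraticModule g p) (hq : InQuadraticModule g q) :
    InQuadraticModule g (p + q) := by
  obtain ⟨s₁, s₂, hs₁, hs₂, rfl⟩ := hp
  obtain ⟨t₁, t₂, ht₁, ht₂, rfl⟩ := hq
  exact ⟨s₁ + t₁, s₂ + t₂, hs₁.add ht₁, hs₂.add ht₂, by ring⟩

theorem sq_mul (a : R) (hp : InQuadraticModule g p) : InQuadraticModule g (a ^ 2 * p) := by
  obtain ⟨s₁, s₂, hs₁, hs₂, rfl⟩ := hp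
  have ha : IsSumSq (a ^ 2) := by rw [sq]; exact .mul_self a
  exact ⟨a ^ 2 * s₁, a ^ 2 * s₂, ha.mul hs₁, ha.mul hs₂, by ring⟩

theorem self_mul (hp : InQuadraticModule g p) : InQuadraticModule g (g * p) := by
  obtain ⟨s₁, s₂, hs₁, hs₂, rfl⟩ := hp
  exact ⟨g * g * s₂, s₁, (IsSumSq.mul_self g).mul hs₂, hs₁, by ring⟩

theorem map_nonneg {S F : Type*} [CommSemiring S] [LinearOrder S] [IsStrictOrderedRing S]
    [ExistsAddOfLE S] [FunLike F R S] [RingHomClass F R S] (f : F)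
    (hp : InQuadraticModule g p) (hg : 0 ≤ f g) : 0 ≤ f p := by
  obtain ⟨s₁, s₂, hs₁, hs₂, rfl⟩ := hp
  rw [map_add, map_mul]
  exact add_nonneg (hs₁.map f).nonneg (mul_nonneg hg (hs₂.map f).nonneg)

end InQuadraticModule

theorem ContinuousOn.exists_isMinOn_Ici {α β : Type*} [LinearOrder α] [TopologicalSpace α]
    [OrderClosedTopology α] [CompactIccSpace α] [NoMaxOrder α] [NoMinOrder α]
    [LinearOrder β] [TopologicalSpace β] [ClosedIicTopology β] {f : α → β} {a : α}
    (hf : ContinuousOn f (Ici a)) (htop : Tendsto f atTop atTop) :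
    ∃ μ ∈ Ici a, IsMinOn f (Ici a) μ := by
  refine hf.exists_isMinOn' isClosed_Ici self_mem_Ici ?_
  rw [cocompact_eq_atBot_atTop, inf_sup_right, (disjoint_atBot_principal_Ici a).eq_bot,
    bot_sup_eq]
  exact (htop.eventually (eventually_ge_atTop (f a))).filter_mono inf_le_left

namespace Polynomial

theorem isSumSq_C_of_nonneg {c : ℝ} (hc : 0 ≤ c) : IsSumSq (C c) := by
  rw [← Real.mul_self_sqrt hc, C_mul]
  exact .mul_self _

theorem natDegree_lt_natDegree_mul {R : Type*} [Semiring R] [NoZeroDivisors R] {g r : R[X]}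
    (h : g * r ≠ 0) (hg : 0 < g.natDegree) : r.natDegree < (g * r).natDegree := by
  rw [natDegree_mul (left_ne_zero_of_mul h) (right_ne_zero_of_mul h)]
  omega

theorem exists_isMinOn_Ici {p : ℝ[X]} {a : ℝ} (hp : ∀ x, a ≤ x → 0 ≤ p.eval x) :
    ∃ μ ∈ Ici a, IsMinOn (fun x ↦ p.eval x) (Ici a) μ := by
  rcases le_or_gt p.degree 0 with hdeg | hdeg
  · refine ⟨a, self_mem_Ici, fun x _ ↦ ?_⟩
    rw [eq_C_of_degree_le_zero hdeg]
    simp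
  · refine p.continuous.continuousOn.exists_isMinOn_Ici ((p.abs_tendsto_atTop hdeg).congr' ?_)
    filter_upwards [eventually_ge_atTop a] with x hx using abs_of_nonneg (hp x hx)

theorem eval_nonneg_of_eval_mul_nonneg {g r : ℝ[X]} {a c : ℝ}
    (hgr : ∀ x, a ≤ x → 0 ≤ (g * r).eval x) (hg : ∀ x, a ≤ x → x ≠ c → 0 < g.eval x) :
    ∀ x, a ≤ x → 0 ≤ r.eval x := by
  have hoff : ∀ x, a ≤ x → x ≠ c → 0 ≤ r.eval x := fun x hx hxc ↦
    nonneg_of_mul_nonneg_right (by simpa using hgr x hx) (hg x hx hxc)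
  intro x hx
  rcases eq_or_ne x c with rfl | hxc
  · refine ge_of_tendsto (r.continuous.continuousAt.mono_left nhdsWithin_le_nhds :
      Tendsto _ (𝓝[>] x) _) ?_
    filter_upwards [self_mem_nhdsWithin] with y hy using hoff y (hx.trans hy.le) hy.ne'
  · exact hoff x hx hxc

theorem sq_X_sub_C_dvd_of_isLocalMin {q : ℝ[X]} {μ : ℝ} (hroot : q.IsRoot μ)
    (hmin : IsLocalMin (fun x ↦ q.eval x) μ) : (X - C μ) ^ 2 ∣ q := by
  rcases eq_or_ne q 0 with rfl | hq0
  · exact dvd_zero _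
  rw [← le_rootMultiplicity_iff hq0]
  exact (one_lt_rootMultiplicity_iff_isRoot hq0).2 ⟨hroot, by simpa using hmin.deriv_eq_zero⟩

theorem exists_factor_of_nonneg_Ici_of_isRoot {q : ℝ[X]} {a μ : ℝ} (hq0 : q ≠ 0)
    (hq : ∀ x, a ≤ x → 0 ≤ q.eval x) (hμ : a ≤ μ) (hroot : q.IsRoot μ) :
    ∃ r : ℝ[X], r.natDegree < q.natDegree ∧ (∀ x, a ≤ x → 0 ≤ r.eval x) ∧
      (InQuadraticModule (X - C a) r → InQuadraticModule (X - C a) q) := by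
  rcases hμ.eq_or_lt with rfl | hμ
  · obtain ⟨r, rfl⟩ := dvd_iff_isRoot.2 hroot
    refine ⟨r, natDegree_lt_natDegree_mul hq0 (by simp),
      eval_nonneg_of_eval_mul_nonneg (c := a) hq ?_, InQuadraticModule.self_mul⟩
    intro x hx hxa
    simpa using hx.lt_of_ne' hxa
  · have hmin : IsLocalMin (fun x ↦ q.eval x) μ := by
      filter_upwards [Ioi_mem_nhds hμ] with x hx
      simpa [hroot.eq_zero] using hq x hx.le
    obtain ⟨r, rfl⟩ := sq_X_sub_C_dvd_of_isLocalMin hroot hmin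
    refine ⟨r, natDegree_lt_natDegree_mul hq0 (by simp),
      eval_nonneg_of_eval_mul_nonneg (c := μ) hq ?_, InQuadraticModule.sq_mul _⟩
    intro x _ hxμ
    simpa using sq_pos_of_ne_zero (sub_ne_zero.2 hxμ)

theorem inQuadraticModule_X_sub_C_of_nonneg_Ici {p : ℝ[X]} {a : ℝ}
    (hp : ∀ x, a ≤ x → 0 ≤ p.eval x) : InQuadraticModule (X - C a) p := by
  induction h : p.natDegree using Nat.strong_induction_on generalizing p with
  | _ n ih =>
    obtain ⟨μ, hμ, hmin⟩ := exists_isMinOn_Ici hp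
    set q := p - C (p.eval μ)
    have hq : ∀ x, a ≤ x → 0 ≤ q.eval x := fun x hx ↦ by simpa [q] using hmin hx
    have hm : InQuadraticModule (X - C a) (C (p.eval μ)) :=
      .of_isSumSq (isSumSq_C_of_nonneg (hp μ hμ))
    rw [← sub_add_cancel p (C (p.eval μ)), add_comm]
    rcases eq_or_ne q 0 with hq0 | hq0
    · simpa [q, hq0] using hm
    obtain ⟨r, hr_deg, hr, hqr⟩ := exists_factor_of_nonneg_Ici_of_isRoot hq0 hq hμ (by simp [q])
    exact hm.add (hqr (ih _ (hr_deg.trans_eq (natDegree_sub_C.trans h)) hr rfl))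

end Polynomial

/-- Pólya–Szegő: a real polynomial is nonnegative on `[1, ∞)` iff it can be
written as `s₁(r) + (r-1)·s₂(r)` with `s₁, s₂` sums of squares. -/
theorem nonneg_on_Ici_iff_sos (p : Polynomial ℝ) :
    (∀ r : ℝ, 1 ≤ r → 0 ≤ p.eval r) ↔
      ∃ s₁ s₂ : Polynomial ℝ, IsSumSq s₁ ∧ IsSumSq s₂ ∧ p = s₁ + (X - 1) * s₂ := by
  refine ⟨fun hp ↦ C_1 (R := ℝ) ▸ inQuadraticModule_X_sub_C_of_nonneg_Ici hp, fun hp r hr ↦ ?_⟩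
  exact InQuadraticModule.map_nonneg (evalRingHom r) hp (by simpa using hr)
end

section
/- A real polynomial s of degree at most 2d is a sum of squares if and only if there exists a positive semidefinite (d+1)×(d+1) real matrix Q with s(r) = b(r)^T Q b(r), where b(r) = (1, r, …, r^d). -/
/-!
Leading coefficients of sums of squares of real polynomials are nonnegative, so no cancellation
happens in the top degree of `∑ pₖ²`: every `pₖ` has degree at most `d` when the sum has degree
at most `2d`. Then `pₖ(r) = cₖ ⬝ b(r)` for the coefficient vector `cₖ`, and `∑ pₖ²` has the Gram
matrix `∑ cₖ cₖᵀ`. Conversely, factoring `Q = Bᵀ B` gives `b(r)ᵀ Q b(r) = ∑ₖ ((B b(r))ₖ)²`, a sum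
of squares of polynomials in `r`.
-/

open Polynomial Matrix

open scoped ComplexOrder in
theorem Matrix.PosSemidef.exists_eq_conjTranspose_mul_self {𝕜 n : Type*} [RCLike 𝕜] [Fintype n]
    {Q : Matrix n n 𝕜} (hQ : Q.PosSemidef) : ∃ B : Matrix n n 𝕜, Q = Bᴴ * B := by
  classical
  open scoped MatrixOrder in
  exact CStarAlgebra.nonneg_iff_eq_star_mul_self.mp hQ.nonneg

theorem Matrix.dotProduct_mulVec_eq_sum_sum {R n : Type*} [CommSemiring R] [Fintype n]
    (x : n → R) (Q : Matrix n n R) : x ⬝ᵥ Q *ᵥ x = ∑ i, ∑ j, x i * Q i j * x j := by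
  simp only [dotProduct, mulVec, Finset.mul_sum, mul_assoc]

theorem Matrix.dotProduct_mulVec_vecMulVec_self {R n : Type*} [CommSemiring R] [Fintype n]
    (x c : n → R) : x ⬝ᵥ vecMulVec c c *ᵥ x = (c ⬝ᵥ x) * (c ⬝ᵥ x) := by
  rw [dotProduct_mulVec, vecMul_vecMulVec, smul_dotProduct, smul_eq_mul, dotProduct_comm x c]

theorem Matrix.dotProduct_mulVec_transpose_mul_self {R n m : Type*} [CommSemiring R] [Fintype n]
    [Fintype m] (x : n → R) (B : Matrix m n R) : x ⬝ᵥ (Bᵀ * B) *ᵥ x = (B *ᵥ x) ⬝ᵥ (B *ᵥ x) := by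
  rw [← mulVec_mulVec, dotProduct_mulVec, vecMul_transpose]

namespace Polynomial

variable {R : Type*} [CommRing R] [LinearOrder R] {p q : R[X]}

theorem coeff_nonneg_of_natDegree_le (hp : 0 ≤ p.leadingCoeff) {n : ℕ} (hn : p.natDegree ≤ n) :
    0 ≤ p.coeff n := by
  rcases hn.eq_or_lt with rfl | hlt
  · exact hp
  · rw [coeff_eq_zero_of_natDegree_lt hlt]

variable [IsStrictOrderedRing R]

theorem natDegree_add_of_leadingCoeff_nonneg (hp : 0 ≤ p.leadingCoeff) (hq : 0 ≤ q.leadingCoeff) :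
    (p + q).natDegree = max p.natDegree q.natDegree := by
  rcases eq_or_ne p 0 with rfl | hp0
  · simp
  rcases eq_or_ne q 0 with rfl | hq0
  · simp
  refine (natDegree_add_le p q).antisymm (le_natDegree_of_ne_zero ?_)
  have hp' := coeff_nonneg_of_natDegree_le hp (le_max_left p.natDegree q.natDegree)
  have hq' := coeff_nonneg_of_natDegree_le hq (le_max_right p.natDegree q.natDegree)
  have hp_pos := hp.lt_of_ne' (leadingCoeff_ne_zero.2 hp0)
  have hq_pos := hq.lt_of_ne' (leadingCoeff_ne_zero.2 hq0)
  rw [coeff_add]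
  rcases le_total p.natDegree q.natDegree with h | h
  · rw [max_eq_right h] at hp' ⊢
    exact (add_pos_of_nonneg_of_pos hp' hq_pos).ne'
  · rw [max_eq_left h] at hq' ⊢
    exact (add_pos_of_pos_of_nonneg hp_pos hq').ne'

theorem leadingCoeff_add_nonneg (hp : 0 ≤ p.leadingCoeff) (hq : 0 ≤ q.leadingCoeff) :
    0 ≤ (p + q).leadingCoeff := by
  rw [leadingCoeff, natDegree_add_of_leadingCoeff_nonneg hp hq, coeff_add]
  exact add_nonneg (coeff_nonneg_of_natDegree_le hp (le_max_left _ _))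
    (coeff_nonneg_of_natDegree_le hq (le_max_right _ _))

theorem leadingCoeff_mul_self_nonneg (p : R[X]) : 0 ≤ (p * p).leadingCoeff := by
  rw [leadingCoeff_mul]
  exact mul_self_nonneg _

theorem leadingCoeff_nonneg_of_isSumSq (hp : IsSumSq p) : 0 ≤ p.leadingCoeff := by
  induction hp with
  | zero => simp
  | sq_add a _ ih => exact leadingCoeff_add_nonneg (leadingCoeff_mul_self_nonneg a) ih

theorem natDegree_mul_self_add_of_isSumSq (p : R[X]) (hq : IsSumSq q) :
    (p * p + q).natDegree = max (2 * p.natDegree) q.natDegree := by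
  rw [natDegree_add_of_leadingCoeff_nonneg (leadingCoeff_mul_self_nonneg p)
    (leadingCoeff_nonneg_of_isSumSq hq), ← sq, natDegree_pow]

end Polynomial

section GramMatrix

variable {d : ℕ} {s t : ℝ[X]}

/-- The vector `b(r) = (1, r, …, r^d)`. -/
def monomialVec (d : ℕ) (r : ℝ) : Fin (d + 1) → ℝ := fun i => r ^ (i : ℕ)

def coeffVec (d : ℕ) (p : ℝ[X]) : Fin (d + 1) → ℝ := fun i => p.coeff i

theorem eval_eq_coeffVec_dotProduct_monomialVec {p : ℝ[X]} (hp : p.natDegree ≤ d) (r : ℝ) :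
    p.eval r = coeffVec d p ⬝ᵥ monomialVec d r := by
  rw [eval_eq_sum_range' (Nat.lt_succ_of_le hp), ← Fin.sum_univ_eq_sum_range]
  rfl

def HasPSDGramMatrix (d : ℕ) (s : ℝ[X]) : Prop :=
  ∃ Q : Matrix (Fin (d + 1)) (Fin (d + 1)) ℝ, Q.PosSemidef ∧
    ∀ r, s.eval r = monomialVec d r ⬝ᵥ Q *ᵥ monomialVec d r

namespace HasPSDGramMatrix

theorem zero : HasPSDGramMatrix d 0 :=
  ⟨0, .zero, by simp⟩

theorem add (hs : HasPSDGramMatrix d s) (ht : HasPSDGramMatrix d t) :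
    HasPSDGramMatrix d (s + t) := by
  obtain ⟨Q, hQ, hs⟩ := hs
  obtain ⟨Q', hQ', ht⟩ := ht
  exact ⟨Q + Q', hQ.add hQ', fun r => by rw [eval_add, hs, ht, add_mulVec, dotProduct_add]⟩

theorem mul_self {p : ℝ[X]} (hp : p.natDegree ≤ d) : HasPSDGramMatrix d (p * p) := by
  refine ⟨vecMulVec (coeffVec d p) (coeffVec d p), ?_, fun r => ?_⟩
  · simpa using posSemidef_vecMulVec_self_star (coeffVec d p)
  · rw [dotProduct_mulVec_vecMulVec_self, eval_mul, eval_eq_coeffVec_dotProduct_monomialVec hp]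

theorem of_isSumSq (hs : IsSumSq s) (hdeg : s.natDegree ≤ 2 * d) : HasPSDGramMatrix d s := by
  induction hs with
  | zero => exact zero
  | sq_add p hq ih =>
    rw [natDegree_mul_self_add_of_isSumSq p hq, max_le_iff] at hdeg
    exact (mul_self (by omega)).add (ih hdeg.2)

theorem isSumSq (hs : HasPSDGramMatrix d s) : IsSumSq s := by
  obtain ⟨Q, hQ, hQs⟩ := hs
  obtain ⟨B, rfl⟩ := hQ.exists_eq_conjTranspose_mul_self
  set p : Fin (d + 1) → ℝ[X] := fun k => ∑ i, C (B k i) * X ^ (i : ℕ)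
  have hp : ∀ k r, (p k).eval r = (B *ᵥ monomialVec d r) k := fun k r => by
    simp [p, eval_finsetSum, mulVec, dotProduct, monomialVec]
  have hs_eq : s = ∑ k, p k * p k := Polynomial.funext fun r => by
    rw [hQs, conjTranspose_eq_transpose_of_trivial, dotProduct_mulVec_transpose_mul_self,
      eval_finsetSum]
    simp only [eval_mul, hp, dotProduct]
  exact hs_eq ▸ IsSumSq.sum_mul_self _ _

end HasPSDGramMatrix

end GramMatrix

/-- A real polynomial `s` of degree at most `2d` is a sum of squares iff
`s(r) = b(r)ᵀ Q b(r)` for a positive semidefinite matrix `Q`, where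
`b(r) = (1, r, …, r^d)`. -/
theorem sos_iff_psd (d : ℕ) (s : Polynomial ℝ) (hdeg : s.natDegree ≤ 2 * d) :
    IsSumSq s ↔
      ∃ Q : Matrix (Fin (d + 1)) (Fin (d + 1)) ℝ, Q.PosSemidef ∧
        ∀ r : ℝ, s.eval r = ∑ i : Fin (d + 1), ∑ j : Fin (d + 1), r ^ (i : ℕ) * Q i j * r ^ (j : ℕ) := by
  simp only [← dotProduct_mulVec_eq_sum_sum]
  exact ⟨(HasPSDGramMatrix.of_isSumSq · hdeg), HasPSDGramMatrix.isSumSq⟩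
end
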